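/- arXiv:math/0510628 — 4 statements merged into one kernel-verified Lean document; each statement's English description precedes it below -/
import Mathlib

section
/- Conversely, order-invariance of Bayesian updating forces the assignment to be proportional to the likelihood: if g : X → ℝ → ℝ (with g(x)(θ) > 0 everywhere) is an assignment of probability densities to the parameter θ based on a single datum, and for all x₁, x₂ ∈ X and all θ ∈ ℝ the two updated densities coincide, B(g(x₁), x₂)(θ) = B(g(x₂), x₁)(θ), then there exist a function π : ℝ → ℝ with π(θ) > 0 and a function Z : X → ℝ with Z(x) > 0 such that g(x)(θ) = π(θ)·p(x,θ)/Z(x) for all x ∈ X and θ ∈ ℝ. -/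
open MeasureTheory

/-- Order-invariance of Bayesian updating forces the single-datum assignment to be
proportional to the likelihood: `g x θ = π θ * p x θ / Z x`. -/
theorem order_invariance_implies_consistency_factor
    {X : Type*} [Nonempty X] (p : X → ℝ → ℝ)
    (hp : ∀ x θ, 0 < p x θ)
    (g : X → ℝ → ℝ) (hg : ∀ x θ, 0 < g x θ)
    (hint : ∀ x₁ x₂, Integrable (fun θ => g x₁ θ * p x₂ θ))
    (hpos : ∀ x₁ x₂, 0 < ∫ θ, g x₁ θ * p x₂ θ)
    (B : (ℝ → ℝ) → X → ℝ → ℝ)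
    (hB : ∀ h x θ, B h x θ = h θ * p x θ / ∫ θ', h θ' * p x θ')
    (hcomm : ∀ x₁ x₂ θ, B (g x₁) x₂ θ = B (g x₂) x₁ θ) :
    ∃ (π : ℝ → ℝ) (Z : X → ℝ), (∀ θ, 0 < π θ) ∧ (∀ x, 0 < Z x) ∧
      ∀ x θ, g x θ = π θ * p x θ / Z x := by
  obtain ⟨x₀⟩ := ‹Nonempty X›
  refine ⟨fun θ => g x₀ θ / p x₀ θ,
    fun x => (∫ θ, g x₀ θ * p x θ) / (∫ θ, g x θ * p x₀ θ),
    fun θ => div_pos (hg x₀ θ) (hp x₀ θ),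
    fun x => div_pos (hpos x₀ x) (hpos x x₀), ?_⟩
  intro x θ
  have h := hcomm x x₀ θ
  rw [hB, hB] at h
  have hA := (hpos x x₀).ne'
  have hBv := (hpos x₀ x).ne'
  have hpθ := (hp x₀ θ).ne'
  field_simp at h ⊢
  nlinarith [h]
end

section
/- Let π : ℝ × (0,∞) → ℝ be continuous with π(μ,σ) > 0 for all μ ∈ ℝ, σ > 0, and suppose there exists k : (0,∞) × ℝ → ℝ such that π(a·μ + b, a·σ) = (k(a,b)/a²)·π(μ,σ) for all a > 0, b ∈ ℝ, μ ∈ ℝ, σ > 0. Then there exist constants c > 0 and r ∈ ℝ such that π(μ,σ) = c·σ^{−r} for all μ ∈ ℝ, σ > 0. -/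
/-!
Translations (`a = 1`) multiply `π` by a factor depending only on the shift, so the ratio
`π μ σ / π 0 σ` does not depend on `σ`; dilations (`b = 0`) then show that `μ ↦ π μ 1` is
invariant under `μ ↦ a μ`, hence constant by continuity at `0`. What remains, `σ ↦ π 0 σ`,
satisfies a multiplicative Cauchy equation, and taking `log ∘ · ∘ exp` turns it into a continuous
additive function, which is linear.
-/

open Filter Topology Set

theorem apply_eq_apply_zero_of_forall_pos_mul {α : Type*} [TopologicalSpace α] [T2Space α]
    {f : ℝ → α} (hf : ContinuousAt f 0) (hdil : ∀ a x, 0 < a → f (a * x) = f x) (x : ℝ) :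
    f x = f 0 := by
  have hlim : Tendsto (fun a => f (a * x)) (𝓝[>] 0) (𝓝 (f 0)) :=
    hf.tendsto.comp <| tendsto_nhdsWithin_of_tendsto_nhds <| by
      simpa using (continuous_mul_const x).tendsto 0
  refine tendsto_nhds_unique (tendsto_const_nhds.congr' ?_) hlim
  filter_upwards [self_mem_nhdsWithin] with a ha using (hdil a x ha).symm

theorem eq_mul_of_continuous_of_map_add {g : ℝ → ℝ} (hg : Continuous g)
    (hadd : ∀ s t, g (s + t) = g s + g t) (t : ℝ) : g t = t * g 1 := by
  simpa using map_real_smul (AddMonoidHom.mk' g hadd) hg t 1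

theorem exists_eq_rpow_of_continuousOn_of_map_mul {f : ℝ → ℝ} (hf : ContinuousOn f (Ioi 0))
    (hpos : ∀ x, 0 < x → 0 < f x) (hmul : ∀ x y, 0 < x → 0 < y → f (x * y) = f x * f y) :
    ∃ r : ℝ, ∀ x, 0 < x → f x = x ^ r := by
  set g : ℝ → ℝ := fun t => Real.log (f (Real.exp t))
  have hg : Continuous g := by
    refine ContinuousOn.comp_continuous (s := {y | y ≠ 0}) Real.continuousOn_log ?_ ?_
    · exact hf.comp_continuous Real.continuous_exp fun t => Real.exp_pos t
    · exact fun t => (hpos _ (Real.exp_pos t)).ne'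
  have hadd : ∀ s t, g (s + t) = g s + g t := fun s t => by
    simp only [g, Real.exp_add, hmul _ _ (Real.exp_pos s) (Real.exp_pos t)]
    exact Real.log_mul (hpos _ (Real.exp_pos s)).ne' (hpos _ (Real.exp_pos t)).ne'
  refine ⟨g 1, fun x hx => ?_⟩
  calc f x = Real.exp (g (Real.log x)) := by simp [g, Real.exp_log hx, Real.exp_log (hpos x hx)]
    _ = x ^ g 1 := by rw [eq_mul_of_continuous_of_map_add hg hadd, Real.rpow_def_of_pos hx]

namespace LocationScale

variable {π k : ℝ → ℝ → ℝ}
  (hk : ∀ a b μ σ, 0 < a → 0 < σ → π (a * μ + b) (a * σ) = (k a b / a ^ 2) * π μ σ)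
include hk

theorem mul_apply_zero_comm {μ σ τ : ℝ} (hσ : 0 < σ) (hτ : 0 < τ) :
    π μ σ * π 0 τ = π μ τ * π 0 σ := by
  have translate : ∀ σ, 0 < σ → π μ σ = k 1 μ * π 0 σ := fun σ hσ => by
    simpa using hk 1 μ 0 σ one_pos hσ
  rw [translate σ hσ, translate τ hτ]
  ring

theorem apply_zero_mul {a σ : ℝ} (ha : 0 < a) (hσ : 0 < σ) :
    π 0 (a * σ) * π 0 1 = π 0 a * π 0 σ := by
  have scale_σ := hk a 0 0 σ ha hσ
  have scale_one := hk a 0 0 1 ha one_pos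
  simp only [mul_zero, add_zero, mul_one] at scale_σ scale_one
  rw [scale_σ, scale_one]
  ring

variable (hpos : ∀ μ σ, 0 < σ → 0 < π μ σ)
include hpos

theorem apply_mul_one {a : ℝ} (ha : 0 < a) (μ : ℝ) : π (a * μ) 1 = π μ 1 := by
  have scale : π (a * μ) a * π 0 1 = π μ 1 * π 0 a := by
    have scale_μ := hk a 0 μ 1 ha one_pos
    have scale_zero := hk a 0 0 1 ha one_pos
    simp only [mul_zero, add_zero, mul_one] at scale_μ scale_zero
    rw [scale_μ, scale_zero]
    ring
  exact mul_right_cancel₀ (hpos 0 a ha).ne' <|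
    (mul_apply_zero_comm hk ha one_pos).symm.trans scale

theorem apply_eq_apply_zero (hc : ContinuousAt (fun μ => π μ 1) 0) {σ : ℝ} (hσ : 0 < σ)
    (μ : ℝ) : π μ σ = π 0 σ := by
  have hconst : π μ 1 = π 0 1 :=
    apply_eq_apply_zero_of_forall_pos_mul hc (fun a μ ha => apply_mul_one hk hpos ha μ) μ
  have cross := mul_apply_zero_comm (μ := μ) hk hσ one_pos
  rw [hconst, mul_comm] at cross
  exact mul_left_cancel₀ (hpos 0 1 one_pos).ne' cross

end LocationScale

open LocationScale in
/-- The functional equation `π (a*μ+b) (a*σ) = (k a b / a^2) * π μ σ` for a positive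
continuous joint consistency factor on `ℝ × (0,∞)` forces `π μ σ = c * σ ^ (-r)`:
the solution is independent of `μ` and a pure power of `σ`. -/
theorem location_scale_consistency_factor_is_power
    (π : ℝ → ℝ → ℝ)
    (hc : ContinuousOn (fun q : ℝ × ℝ => π q.1 q.2) (Set.univ ×ˢ Set.Ioi 0))
    (hpos : ∀ μ σ, 0 < σ → 0 < π μ σ)
    (k : ℝ → ℝ → ℝ)
    (hk : ∀ a b μ σ, 0 < a → 0 < σ →
      π (a * μ + b) (a * σ) = (k a b / a ^ 2) * π μ σ) :
    ∃ (c r : ℝ), 0 < c ∧ ∀ μ σ, 0 < σ → π μ σ = c * σ ^ (-r) := by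
  have hc_loc : Continuous fun μ => π μ 1 :=
    hc.comp_continuous (continuous_id.prodMk continuous_const) fun _ => by simp
  have hc_scale : ContinuousOn (fun σ => π 0 σ) (Ioi 0) :=
    hc.comp (continuousOn_const.prodMk continuousOn_id) fun _ hσ => ⟨trivial, hσ⟩
  have h₁ := hpos 0 1 one_pos
  obtain ⟨r, hr⟩ := exists_eq_rpow_of_continuousOn_of_map_mul (f := fun σ => π 0 σ / π 0 1)
    (hc_scale.div_const _) (fun σ hσ => div_pos (hpos 0 σ hσ) h₁) fun a σ ha hσ => by
      rw [div_mul_div_comm, ← apply_zero_mul hk ha hσ, mul_div_mul_right _ _ h₁.ne']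
  refine ⟨π 0 1, -r, h₁, fun μ σ hσ => ?_⟩
  rw [apply_eq_apply_zero hk hpos hc_loc.continuousAt hσ μ, neg_neg, ← hr σ hσ,
    mul_div_cancel₀ _ h₁.ne']
end

section
/- Exact frequentist calibration of scale-parameter inference: let ψ : ℝ → ℝ be a nonnegative measurable function with ∫₀^∞ ψ = 1, let σ₀ > 0, and let X be a random variable with values in (0,∞) whose law has density x ↦ σ₀^{−1}·ψ(x/σ₀) with respect to Lebesgue measure. Define G(x) = ∫₀^{σ₀} x·σ^{−2}·ψ(x/σ) dσ. Then for every δ ∈ [0,1], P(G(X) ≤ δ) = δ; that is, G(X) is uniformly distributed on [0,1]. -/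
open MeasureTheory

/-- Exact frequentist calibration of scale-parameter inference: if `X` takes values in
`(0,∞)` with density `x ↦ σ₀⁻¹ ψ (x/σ₀)` and `G x = ∫₀^{σ₀} x σ⁻² ψ (x/σ) dσ` is the
posterior probability that the scale parameter does not exceed its true value, then
`G (X)` is uniform on `[0,1]`. -/
theorem scale_inference_is_calibrated
    {Ω : Type*} [MeasurableSpace Ω] (P : Measure Ω) [IsProbabilityMeasure P]
    (ψ : ℝ → ℝ) (hm : Measurable ψ) (h0 : ∀ u, 0 ≤ ψ u)
    (hnorm : ∫ u in Set.Ioi (0 : ℝ), ψ u = 1) (σ₀ : ℝ) (hσ₀ : 0 < σ₀)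
    (X : Ω → ℝ) (hX : Measurable X) (hXpos : ∀ ω, 0 < X ω)
    (hlaw : Measure.map X P =
      (volume.restrict (Set.Ioi (0 : ℝ))).withDensity
        (fun x => ENNReal.ofReal (σ₀⁻¹ * ψ (x / σ₀))))
    (G : ℝ → ℝ) (hG : ∀ x, G x = ∫ σ in Set.Ioc (0 : ℝ) σ₀, x * σ⁻¹ ^ 2 * ψ (x / σ)) :
    ∀ δ ∈ Set.Icc (0 : ℝ) 1, P {ω | G (X ω) ≤ δ} = ENNReal.ofReal δ := by
  intro δ hδ
  -- `ψ` is integrable on `(0,∞)`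
  have hψi : IntegrableOn ψ (Set.Ioi (0 : ℝ)) := integrable_of_integral_eq_one hnorm
  -- Extend by `0` to an integrable function on `ℝ`.
  set ψ' : ℝ → ℝ := (Set.Ioi (0 : ℝ)).indicator ψ with hψ'def
  have hψ'i : Integrable ψ' :=
    (integrable_indicator_iff measurableSet_Ioi).mpr hψi
  have hψ'0 : ∀ u, 0 ≤ ψ' u := fun u => Set.indicator_nonneg (fun x _ => h0 x) u
  -- The survival function
  set T : ℝ → ℝ := fun y => ∫ u in Set.Ioi y, ψ' u with hTdef
  have hT1 : T 0 = 1 := by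
    have : ∫ u in Set.Ioi (0 : ℝ), ψ' u = ∫ u in Set.Ioi (0 : ℝ), ψ u :=
      setIntegral_congr_fun measurableSet_Ioi fun x hx => Set.indicator_of_mem hx ψ
    simpa [hTdef, this] using hnorm
  have hTanti : Antitone T := by
    intro y z hyz
    exact setIntegral_mono_set hψ'i.integrableOn
      (Filter.Eventually.of_forall hψ'0)
      (HasSubset.Subset.eventuallyLE (Set.Ioi_subset_Ioi hyz))
  have hTrepr : ∀ y, T y = T 0 - ∫ u in (0:ℝ)..y, ψ' u := by
    intro y
    rcases le_or_gt 0 y with hy | hy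
    · have hunion : Set.Ioc (0:ℝ) y ∪ Set.Ioi y = Set.Ioi 0 := Set.Ioc_union_Ioi_eq_Ioi hy
      have hdisj : Disjoint (Set.Ioc (0:ℝ) y) (Set.Ioi y) := by
        apply Set.disjoint_left.mpr
        intro a ha ha'
        exact absurd ha.2 (not_le.mpr ha')
      have hsplit : T 0 = (∫ u in Set.Ioc (0:ℝ) y, ψ' u) + T y := by
        show (∫ u in Set.Ioi (0:ℝ), ψ' u)
          = (∫ u in Set.Ioc (0:ℝ) y, ψ' u) + ∫ u in Set.Ioi y, ψ' u
        rw [← hunion, setIntegral_union hdisj measurableSet_Ioi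
          (hψ'i.integrableOn) (hψ'i.integrableOn)]
      rw [intervalIntegral.integral_of_le hy]
      rw [hsplit]; ring
    · have h1 : T y = T 0 := by
        have h2 : ∫ u in Set.Ioi y, ψ' u = ∫ u in Set.Ioi y ∩ Set.Ioi 0, ψ u := by
          rw [hψ'def, setIntegral_indicator measurableSet_Ioi]
        have h3 : Set.Ioi y ∩ Set.Ioi (0:ℝ) = Set.Ioi 0 :=
          Set.inter_eq_right.mpr (Set.Ioi_subset_Ioi hy.le)
        have h4 : ∫ u in Set.Ioi (0:ℝ), ψ' u = ∫ u in Set.Ioi (0:ℝ) ∩ Set.Ioi 0, ψ u := by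
          rw [hψ'def, setIntegral_indicator measurableSet_Ioi]
        simp only [hTdef]
        rw [h2, h3, h4, Set.inter_self]
      have h5 : ∫ u in (0:ℝ)..y, ψ' u = 0 := by
        rw [intervalIntegral.integral_of_ge hy.le]
        have h6 : ∫ u in Set.Ioc y 0, ψ' u = ∫ u in Set.Ioc y 0 ∩ Set.Ioi 0, ψ u := by
          rw [hψ'def, setIntegral_indicator measurableSet_Ioi]
        have h7 : Set.Ioc y (0:ℝ) ∩ Set.Ioi 0 = ∅ := by
          ext a
          simp only [Set.mem_inter_iff, Set.mem_Ioc, Set.mem_Ioi, Set.mem_empty_iff_false,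
            iff_false]
          rintro ⟨⟨_, ha⟩, ha'⟩
          exact absurd ha (not_le.mpr ha')
        rw [h6, h7]; simp
      rw [h1, h5]; ring
  have hTfun : T = fun y => T 0 - ∫ u in (0:ℝ)..y, ψ' u := funext hTrepr
  have hTcont : Continuous T := by
    rw [hTfun]
    exact continuous_const.sub
      (intervalIntegral.continuous_primitive (fun a b => hψ'i.intervalIntegrable) 0)
  have hTtop : Filter.Tendsto T Filter.atTop (nhds 0) := by
    have h1 : Filter.Tendsto (fun y => ∫ u in (0:ℝ)..y, ψ' u) Filter.atTop
        (nhds (∫ u in Set.Ioi (0:ℝ), ψ' u)) :=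
      intervalIntegral_tendsto_integral_Ioi 0 hψ'i.integrableOn Filter.tendsto_id
    have h2 : Filter.Tendsto (fun y => T 0 - ∫ u in (0:ℝ)..y, ψ' u) Filter.atTop
        (nhds (T 0 - ∫ u in Set.Ioi (0:ℝ), ψ' u)) := (tendsto_const_nhds.sub h1)
    have h3 : T 0 - ∫ u in Set.Ioi (0:ℝ), ψ' u = 0 := by
      simp [hTdef]
    rw [hTfun]
    rw [h3] at h2
    exact h2
  -- scaling identities
  have hdens : ∀ b : ℝ, 0 ≤ b →
      IntegrableOn (fun x => σ₀⁻¹ * ψ (x / σ₀)) (Set.Ioi b) ∧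
      ∫ x in Set.Ioi b, σ₀⁻¹ * ψ (x / σ₀) = T (b / σ₀) := by
    intro b hb
    have heq : Set.EqOn (fun x => ψ' (σ₀⁻¹ * x)) (fun x => ψ (x / σ₀)) (Set.Ioi b) := by
      intro x hx
      have hxpos : 0 < σ₀⁻¹ * x := mul_pos (inv_pos.mpr hσ₀) (lt_of_le_of_lt hb hx)
      simp only [hψ'def, Set.indicator_of_mem (Set.mem_Ioi.mpr hxpos), div_eq_inv_mul]
    have hint' : IntegrableOn (fun x => ψ' (σ₀⁻¹ * x)) (Set.Ioi b) := by
      rw [integrableOn_Ioi_comp_mul_left_iff ψ' b (inv_pos.mpr hσ₀)]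
      exact hψ'i.integrableOn
    have hint : IntegrableOn (fun x => ψ (x / σ₀)) (Set.Ioi b) :=
      hint'.congr_fun heq measurableSet_Ioi
    refine ⟨hint.const_mul _, ?_⟩
    have h1 : ∫ x in Set.Ioi b, σ₀⁻¹ * ψ (x / σ₀) = σ₀⁻¹ * ∫ x in Set.Ioi b, ψ (x / σ₀) :=
      integral_const_mul _ _
    have h2 : ∫ x in Set.Ioi b, ψ (x / σ₀) = ∫ x in Set.Ioi b, ψ' (σ₀⁻¹ * x) :=
      (setIntegral_congr_fun measurableSet_Ioi heq).symm
    have h3 : ∫ x in Set.Ioi b, ψ' (σ₀⁻¹ * x)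
        = (σ₀⁻¹)⁻¹ • ∫ x in Set.Ioi (σ₀⁻¹ * b), ψ' x :=
      integral_comp_mul_left_Ioi ψ' b (inv_pos.mpr hσ₀)
    rw [h1, h2, h3]
    rw [inv_inv, smul_eq_mul, ← mul_assoc, inv_mul_cancel₀ hσ₀.ne', one_mul,
      inv_mul_eq_div]
  -- the substitution `σ ↦ x / σ` turns `G` into the survival function
  have hGT : ∀ x : ℝ, 0 < x → G x = T (x / σ₀) := by
    intro x hx
    have hxσ : 0 < x / σ₀ := div_pos hx hσ₀
    have himg : (fun σ => x / σ) '' Set.Ioc 0 σ₀ = Set.Ici (x / σ₀) := by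
      ext y
      constructor
      · rintro ⟨σ, hσ, rfl⟩
        refine Set.mem_Ici.mpr ?_
        show x / σ₀ ≤ x / σ
        gcongr
        exacts [hσ.1, hσ.2]
      · intro hy
        have hy0 : 0 < y := lt_of_lt_of_le hxσ hy
        refine ⟨x / y, ⟨div_pos hx hy0, ?_⟩, ?_⟩
        · rw [div_le_iff₀ hy0]
          calc x = σ₀ * (x / σ₀) := by field_simp
          _ ≤ σ₀ * y := by gcongr; exact hy
        · field_simp
    have hder : ∀ σ ∈ Set.Ioc (0:ℝ) σ₀,
        HasDerivWithinAt (fun σ => x / σ) (x * -(σ ^ 2)⁻¹) (Set.Ioc 0 σ₀) σ := by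
      intro σ hσ
      have h1 : HasDerivAt (fun σ : ℝ => x * σ⁻¹) (x * -(σ ^ 2)⁻¹) σ :=
        (hasDerivAt_inv hσ.1.ne').const_mul x
      have h2 : (fun σ : ℝ => x / σ) = fun σ : ℝ => x * σ⁻¹ :=
        funext fun σ => div_eq_mul_inv x σ
      rw [h2]
      exact h1.hasDerivWithinAt
    have hinj : Set.InjOn (fun σ => x / σ) (Set.Ioc (0:ℝ) σ₀) := by
      intro a ha b hb hab
      have hab' : x / a = x / b := hab
      rw [div_eq_div_iff ha.1.ne' hb.1.ne'] at hab'
      exact (mul_left_cancel₀ hx.ne' hab').symm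
    have hsub : ∫ u in (fun σ => x / σ) '' Set.Ioc (0:ℝ) σ₀, ψ u
        = ∫ σ in Set.Ioc (0:ℝ) σ₀, |x * -(σ ^ 2)⁻¹| • ψ (x / σ) :=
      integral_image_eq_integral_abs_deriv_smul measurableSet_Ioc hder hinj ψ
    have hcongr : ∫ σ in Set.Ioc (0:ℝ) σ₀, |x * -(σ ^ 2)⁻¹| • ψ (x / σ)
        = ∫ σ in Set.Ioc (0:ℝ) σ₀, x * σ⁻¹ ^ 2 * ψ (x / σ) := by
      refine setIntegral_congr_fun measurableSet_Ioc fun σ hσ => ?_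
      have hσ2 : (0:ℝ) < σ ^ 2 := pow_pos hσ.1 2
      rw [smul_eq_mul, abs_mul, abs_neg, abs_inv, abs_of_pos hσ2, abs_of_pos hx,
        inv_pow]
    have hIci : ∫ u in Set.Ici (x / σ₀), ψ u = ∫ u in Set.Ioi (x / σ₀), ψ u :=
      integral_Ici_eq_integral_Ioi
    have hind : ∫ u in Set.Ioi (x / σ₀), ψ u = T (x / σ₀) := by
      refine (setIntegral_congr_fun measurableSet_Ioi fun u hu => ?_).symm
      exact Set.indicator_of_mem (Set.mem_Ioi.mpr (lt_trans hxσ hu)) ψ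
    rw [hG x, ← hcongr, ← hsub, himg, hIci, hind]
  -- the event in terms of the law of `X`
  set S : Set ℝ := {x : ℝ | T (x / σ₀) ≤ δ} ∩ Set.Ioi 0 with hSdef
  have hTm : Measurable T := hTcont.measurable
  have hS : MeasurableSet S :=
    ((hTm.comp (measurable_id.div_const σ₀)) measurableSet_Iic).inter measurableSet_Ioi
  have hset : {ω | G (X ω) ≤ δ} = X ⁻¹' S := by
    ext ω
    simp only [Set.mem_setOf_eq, Set.mem_preimage, hSdef, Set.mem_inter_iff, Set.mem_Ioi]
    rw [hGT (X ω) (hXpos ω)]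
    exact ⟨fun h => ⟨h, hXpos ω⟩, fun h => h.1⟩
  have hmap : P {ω | G (X ω) ≤ δ} = ∫⁻ x in S, ENNReal.ofReal (σ₀⁻¹ * ψ (x / σ₀)) := by
    rw [hset, ← Measure.map_apply hX hS, hlaw, withDensity_apply _ hS,
      Measure.restrict_restrict hS]
    congr 1
    rw [hSdef, Set.inter_assoc, Set.inter_self]
  rw [hmap]
  -- main computation
  by_cases hSe : S = ∅
  · have hδ0 : δ = 0 := by
      by_contra hne
      have hδpos : 0 < δ := lt_of_le_of_ne hδ.1 (Ne.symm hne)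
      have htend : Filter.Tendsto (fun x : ℝ => T (x / σ₀)) Filter.atTop (nhds 0) :=
        hTtop.comp (Filter.tendsto_id.atTop_div_const hσ₀)
      have h1 : ∀ᶠ x : ℝ in Filter.atTop, T (x / σ₀) < δ := htend.eventually_lt_const hδpos
      have h2 : ∀ᶠ x : ℝ in Filter.atTop, 0 < x := Filter.eventually_gt_atTop 0
      obtain ⟨x, hx1, hx2⟩ := (h1.and h2).exists
      have : x ∈ S := ⟨le_of_lt hx1, hx2⟩
      rw [hSe] at this
      exact this
    rw [hSe, hδ0]
    simp
  · have hne : S.Nonempty := Set.nonempty_iff_ne_empty.mpr hSe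
    set b : ℝ := sInf S with hbdef
    have hbdd : BddBelow S := ⟨0, fun x hx => le_of_lt hx.2⟩
    have hb0 : 0 ≤ b := le_csInf hne fun x hx => hx.2.le
    have hsub : Set.Ioi b ⊆ S := by
      intro y hy
      obtain ⟨x, hxS, hxy⟩ := (csInf_lt_iff hbdd hne).mp hy
      refine ⟨?_, lt_trans hxS.2 hxy⟩
      show T (y / σ₀) ≤ δ
      have h1 : T (y / σ₀) ≤ T (x / σ₀) := hTanti (by gcongr)
      exact le_trans h1 hxS.1
    have hWle : T (b / σ₀) ≤ δ := by
      have hcont : Filter.Tendsto (fun y : ℝ => T (y / σ₀)) (nhdsWithin b (Set.Ioi b))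
          (nhds (T (b / σ₀))) :=
        ((hTcont.comp (continuous_id.div_const σ₀)).tendsto b).mono_left nhdsWithin_le_nhds
      refine le_of_tendsto hcont ?_
      filter_upwards [self_mem_nhdsWithin] with y hy
      exact (hsub hy).1
    have hWge : δ ≤ T (b / σ₀) := by
      rcases hb0.eq_or_lt with hb | hb
      · rw [← hb, zero_div, hT1]
        exact hδ.2
      · have hcont : Filter.Tendsto (fun y : ℝ => T (y / σ₀)) (nhdsWithin b (Set.Iio b))
            (nhds (T (b / σ₀))) :=
          ((hTcont.comp (continuous_id.div_const σ₀)).tendsto b).mono_left nhdsWithin_le_nhds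
        refine ge_of_tendsto hcont ?_
        filter_upwards [Ioo_mem_nhdsLT_of_mem (Set.mem_Ioc.mpr ⟨hb, le_refl b⟩)] with y hy
        have hyS : y ∉ S := notMem_of_lt_csInf hy.2 hbdd
        by_contra hlt
        exact hyS ⟨le_of_lt (not_le.mp hlt), hy.1⟩
    have hWb : T (b / σ₀) = δ := le_antisymm hWle hWge
    have hSae : S =ᵐ[volume] Set.Ioi b := by
      have hdiff : {x : ℝ | ¬(x ∈ S ↔ x ∈ Set.Ioi b)} ⊆ {b} := by
        intro x hx
        simp only [Set.mem_setOf_eq] at hx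
        rw [Set.mem_singleton_iff]
        by_contra hxb
        rcases lt_or_gt_of_ne hxb with h | h
        · exact hx (iff_of_false (notMem_of_lt_csInf h hbdd) fun hI => lt_asymm h hI)
        · exact hx (iff_of_true (hsub h) h)
      rw [Filter.eventuallyEq_set, MeasureTheory.ae_iff]
      exact measure_mono_null hdiff Real.volume_singleton
    rw [setLIntegral_congr hSae]
    obtain ⟨hint, hval⟩ := hdens b hb0
    rw [← ofReal_integral_eq_lintegral_ofReal hint
      (Filter.Eventually.of_forall fun x => mul_nonneg (inv_nonneg.mpr hσ₀.le) (h0 _))]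
    rw [hval, hWb]
end

section
/- If a probabilistic inference is simultaneously consistent and exactly calibrated, the sampling family is reducible to a location family: let f : ℝ × ℝ → ℝ be a twice continuously differentiable function with f(x,θ) > 0 and ∫_ℝ f(x,θ) dx = 1 for every θ, and let F(x,θ) = ∫_{−∞}^x f(t,θ) dt be its distribution function. Suppose there exists a continuous function π : ℝ → ℝ with π(θ) > 0 such that for every x the integral ∫ π(θ)f(x,θ) dθ is finite and strictly positive and the posterior density assigned via the Consistency Theorem is exactly calibrated, i.e. π(θ)·f(x,θ) / ∫ π(θ')·f(x,θ') dθ' = −∂F/∂θ(x,θ) for all x, θ ∈ ℝ. Then there exist strictly monotone differentiable functions u, v : ℝ → ℝ and a nonnegative function φ : ℝ → ℝ with ∫_ℝ φ = 1 such that f(x,θ) = φ(u(x) − v(θ))·u'(x) for all x, θ; that is, after the separate one-to-one transformations y = u(x) of the sample space and μ = v(θ) of the parameter space, the sampling density takes the pure location form φ(y − μ). -/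
/-!
Calibration says `∂F/∂θ = -(π θ / Z x) ∂F/∂x` with `Z x = ∫ π θ f x θ dθ`. Integrating it over
`θ ∈ [0, 1]` shows that `Z` is continuous, so `u = ∫ Z` and `v = ∫ π` are `C¹` and strictly
increasing, and in the coordinates `(u x, v θ)` the two partial derivatives of `F` cancel: `F` is
constant along the characteristics `u x - v θ = const`. Since `F (·, θ)` rises from `0` to `1` for
every `θ`, the range of `u` is unbounded on both sides (otherwise a short shift along a
characteristic would keep `F` away from `1`, resp. `0`), so `u` is onto, `F x θ = G (u x - v θ)`
for a single function `G`, and differentiating in `x` gives `f x θ = G' (u x - v θ) u' x`.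
-/

open MeasureTheory
open Set Filter Topology Asymptotics Function

theorem hasDerivAt_of_deriv_eq_of_ne_zero {g : ℝ → ℝ} {x d : ℝ} (h : deriv g x = d)
    (hd : d ≠ 0) : HasDerivAt g d x :=
  h ▸ (differentiableAt_of_deriv_ne_zero (h ▸ hd)).hasDerivAt

theorem hasFDerivAt_intervalIntegral_fst {f : ℝ → ℝ → ℝ}
    (hf : Continuous fun q : ℝ × ℝ => f q.1 q.2) (a θ₀ : ℝ) :
    HasFDerivAt (fun p : ℝ × ℝ => ∫ t in a..p.1, f t p.2)
      (f a θ₀ • ContinuousLinearMap.fst ℝ ℝ ℝ) (a, θ₀) := by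
  rw [hasFDerivAt_iff_isLittleO, isLittleO_iff]
  intro ε hε
  obtain ⟨δ, hδ, hclose⟩ := Metric.continuous_iff.1 hf (a, θ₀) ε hε
  filter_upwards [Metric.ball_mem_nhds _ hδ] with p hp
  have hbound : ∀ t ∈ uIoc a p.1, ‖f t p.2 - f a θ₀‖ ≤ ε := by
    intro t ht
    refine (hclose (t, p.2) (lt_of_le_of_lt ?_ hp)).le
    rw [Prod.dist_eq, Prod.dist_eq]
    refine max_le_max ?_ le_rfl
    simpa only [Real.dist_eq] using abs_sub_left_of_mem_uIcc (uIoc_subset_uIcc ht)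
  have hcont : Continuous fun t => f t p.2 := hf.comp (continuous_id.prodMk continuous_const)
  calc ‖(∫ t in a..p.1, f t p.2) - (∫ t in a..a, f t θ₀)
        - (f a θ₀ • ContinuousLinearMap.fst ℝ ℝ ℝ) (p - (a, θ₀))‖
      = ‖∫ t in a..p.1, (f t p.2 - f a θ₀)‖ := by
        rw [intervalIntegral.integral_sub (hcont.intervalIntegrable _ _) intervalIntegrable_const]
        simp [mul_comm]
    _ ≤ ε * |p.1 - a| := intervalIntegral.norm_integral_le_of_norm_le_const hbound
    _ ≤ ε * ‖p - (a, θ₀)‖ := by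
        gcongr
        exact norm_fst_le (p - (a, θ₀))

theorem hasDerivAt_of_continuous_partial_fst {F f : ℝ → ℝ → ℝ}
    (hf : Continuous fun q : ℝ × ℝ => f q.1 q.2)
    (hFx : ∀ x θ, HasDerivAt (fun x => F x θ) (f x θ) x)
    {h : ℝ → ℝ} {h' d θ₀ : ℝ} (hh : HasDerivAt h h' θ₀) (hFθ : HasDerivAt (F (h θ₀)) d θ₀) :
    HasDerivAt (fun θ => F (h θ) θ) (d + f (h θ₀) θ₀ * h') θ₀ := by
  have hsplit : ∀ θ, F (h θ) θ = F (h θ₀) θ + ∫ t in h θ₀..h θ, f t θ := fun θ => by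
    rw [intervalIntegral.integral_eq_sub_of_hasDerivAt (fun t _ => hFx t θ)
      ((hf.comp (continuous_id.prodMk continuous_const)).intervalIntegrable _ _)]
    ring
  have hint : HasDerivAt (fun θ => ∫ t in h θ₀..h θ, f t θ) (f (h θ₀) θ₀ * h') θ₀ := by
    have := (hasFDerivAt_intervalIntegral_fst hf (h θ₀) θ₀).comp_hasDerivAt
      (f := fun θ => (h θ, θ)) θ₀ (hh.prodMk (hasDerivAt_id' θ₀))
    simpa [Function.comp_def] using this
  exact (hFθ.add hint).congr_of_eventuallyEq (.of_forall hsplit)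

section Characteristics

variable {F f : ℝ → ℝ → ℝ} {u v u' v' : ℝ → ℝ}

theorem eq_of_sub_eq_of_hasDerivAt_partial (hf : Continuous fun q : ℝ × ℝ => f q.1 q.2)
    (hFx : ∀ x θ, HasDerivAt (fun x => F x θ) (f x θ) x)
    (hFθ : ∀ x θ, HasDerivAt (F x) (-(v' θ * f x θ / u' x)) θ)
    (hu : ∀ x, HasStrictDerivAt u (u' x) x) (hu' : ∀ x, 0 < u' x)
    (hv : ∀ θ, HasDerivAt v (v' θ) θ) (hvm : Monotone v)
    {x₁ θ₁ x₂ θ₂ : ℝ} (h : u x₁ - v θ₁ = u x₂ - v θ₂) : F x₁ θ₁ = F x₂ θ₂ := by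
  wlog hθ : θ₁ ≤ θ₂ generalizing x₁ θ₁ x₂ θ₂
  · exact (this h.symm (le_of_not_ge hθ)).symm
  have huc : Continuous u := continuous_iff_continuousAt.2 fun x => (hu x).hasDerivAt.continuousAt
  have hgu : ∀ x, invFun u (u x) = x :=
    leftInverse_invFun (strictMono_of_hasDerivAt_pos (fun x => (hu x).hasDerivAt) hu').injective
  have hg : ∀ x, HasDerivAt (invFun u) (u' x)⁻¹ (u x) := fun x =>
    ((hu x).to_local_left_inverse (hu' x).ne' (.of_forall hgu)).hasDerivAt
  -- `θ ↦ (invFun u (w θ), θ)` runs along the characteristic through `(x₁, θ₁)`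
  set w : ℝ → ℝ := fun θ => u x₁ + (v θ - v θ₁)
  have hw : ∀ θ ∈ Icc θ₁ θ₂, ∃ x, u x = w θ := fun θ hθ' =>
    (isPreconnected_range huc).Icc_subset ⟨x₁, rfl⟩ ⟨x₂, rfl⟩
      ⟨by linarith [hvm hθ'.1], by linarith [hvm hθ'.2]⟩
  have hderiv : ∀ θ ∈ Icc θ₁ θ₂, HasDerivAt (fun θ => F (invFun u (w θ)) θ) 0 θ := by
    intro θ hθ'
    obtain ⟨x, hx⟩ := hw θ hθ'
    have hgx : invFun u (w θ) = x := by rw [← hx, hgu]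
    have hpath : HasDerivAt (fun θ => invFun u (w θ)) ((u' x)⁻¹ * v' θ) θ :=
      (hx ▸ hg x).comp θ (((hv θ).sub_const _).const_add _)
    have := hasDerivAt_of_continuous_partial_fst hf hFx hpath (hgx ▸ hFθ x θ)
    rwa [hgx, show -(v' θ * f x θ / u' x) + f x θ * ((u' x)⁻¹ * v' θ) = 0 by
      field_simp [(hu' x).ne']; ring] at this
  have hconst := constant_of_has_deriv_right_zero
    (fun θ hθ' => (hderiv θ hθ').continuousAt.continuousWithinAt)
    (fun θ hθ' => (hderiv θ (Ico_subset_Icc_self hθ')).hasDerivWithinAt) θ₂ (right_mem_Icc.2 hθ)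
  simpa [w, hgu, show u x₁ + (v θ₂ - v θ₁) = u x₂ by linarith] using hconst.symm

end Characteristics

section Surjectivity

variable {F : ℝ → ℝ → ℝ} {u v : ℝ → ℝ}

theorem not_bddAbove_range_of_sub_invariant
    (hF : ∀ θ, StrictMono (F · θ)) (hFtop : ∀ θ, Tendsto (F · θ) atTop (𝓝 1))
    (hu : StrictMono u) (huc : Continuous u) (hv : StrictMono v) (hvc : Continuous v)
    (hinv : ∀ x₁ θ₁ x₂ θ₂, u x₁ - v θ₁ = u x₂ - v θ₂ → F x₁ θ₁ = F x₂ θ₂) :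
    ¬ BddAbove (range u) := by
  intro hbdd
  set L := ⨆ x, u x
  have huL : ∀ x, u x ≤ L := le_ciSup hbdd
  have hu0L : u 0 < L := (hu zero_lt_one).trans_le (huL 1)
  obtain ⟨θ, hθL, hθ⟩ : ∃ θ, v θ < v 0 + (L - u 0) ∧ 0 < θ :=
    (((hvc.continuousAt.eventually (gt_mem_nhds (by linarith))).filter_mono
      nhdsWithin_le_nhds).and (self_mem_nhdsWithin (s := Ioi 0))).exists
  set c := v θ - v 0
  have hc : 0 < c := sub_pos.2 (hv hθ)
  obtain ⟨x₁, hx₁⟩ := exists_lt_of_lt_ciSup (show L - c < L by linarith)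
  obtain ⟨x₂, hx₂⟩ := exists_lt_of_lt_ciSup (show u 0 + c < L by linarith)
  -- along a characteristic, `F x θ = F x' 0` with `u x' = u x - c < u x₁`
  have hle : ∀ x ≥ x₂, F x θ ≤ F x₁ 0 := by
    intro x hx
    obtain ⟨x', hx'⟩ : u x - c ∈ range u := (isPreconnected_range huc).Icc_subset ⟨0, rfl⟩
      ⟨x, rfl⟩ ⟨by linarith [hu.monotone hx], by linarith⟩
    rw [hinv x θ x' 0 (by linarith)]
    exact (hF 0).monotone (hu.lt_iff_lt.1 (by linarith [huL x])).le
  have h1 : 1 ≤ F x₁ 0 := le_of_tendsto (hFtop θ) (eventually_atTop.2 ⟨x₂, hle⟩)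
  have h2 : F x₁ 0 < 1 :=
    (hF 0 (lt_add_one x₁)).trans_le ((hF 0).monotone.ge_of_tendsto (hFtop 0) _)
  linarith

theorem surjective_of_sub_invariant
    (hF : ∀ θ, StrictMono (F · θ)) (hFtop : ∀ θ, Tendsto (F · θ) atTop (𝓝 1))
    (hFbot : ∀ θ, Tendsto (F · θ) atBot (𝓝 0))
    (hu : StrictMono u) (huc : Continuous u) (hv : StrictMono v) (hvc : Continuous v)
    (hinv : ∀ x₁ θ₁ x₂ θ₂, u x₁ - v θ₁ = u x₂ - v θ₂ → F x₁ θ₁ = F x₂ θ₂) :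
    Surjective u := by
  have htop : Tendsto u atTop atTop := hu.monotone.tendsto_atTop_atTop fun b => by
    obtain ⟨_, ⟨x, rfl⟩, hx⟩ :=
      not_bddAbove_iff.1 (not_bddAbove_range_of_sub_invariant hF hFtop hu huc hv hvc hinv) b
    exact ⟨x, hx.le⟩
  -- reflecting `x ↦ -x`, `θ ↦ -θ`, `F ↦ 1 - F` exchanges the two ends of the sample space
  have hrefl := not_bddAbove_range_of_sub_invariant (F := fun x θ => 1 - F (-x) (-θ))
    (u := fun x => -u (-x)) (v := fun θ => -v (-θ))
    (fun θ => fun a b hab => by simpa using hF (-θ) (neg_lt_neg hab))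
    (fun θ => by simpa using ((hFbot (-θ)).comp tendsto_neg_atTop_atBot).const_sub 1)
    (fun a b hab => by simpa using hu (neg_lt_neg hab)) (by fun_prop)
    (fun a b hab => by simpa using hv (neg_lt_neg hab)) (by fun_prop)
    (fun x₁ θ₁ x₂ θ₂ h => by rw [hinv _ _ _ _ (by linarith)])
  have hbot : Tendsto u atBot atBot := hu.monotone.tendsto_atBot_atBot fun b => by
    obtain ⟨_, ⟨x, rfl⟩, hx⟩ := not_bddAbove_iff.1 hrefl (-b)
    exact ⟨-x, by linarith⟩
  exact huc.surjective htop hbot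

end Surjectivity

section DistributionFunction

variable {g : ℝ → ℝ}

theorem hasDerivAt_setIntegral_Iic (hg : Continuous g) (hgi : Integrable g) (x : ℝ) :
    HasDerivAt (fun x => ∫ t in Iic x, g t) (g x) x := by
  have hsplit : ∀ y, ∫ t in Iic y, g t = (∫ t in Iic x, g t) + ∫ t in x..y, g t := fun y => by
    rw [← intervalIntegral.integral_Iic_sub_Iic hgi.integrableOn hgi.integrableOn]; ring
  exact (((hg.integral_hasStrictDerivAt x x).hasDerivAt).const_add _).congr_of_eventuallyEq
    (.of_forall hsplit)

theorem strictMono_setIntegral_Iic (hg : Continuous g) (hgi : Integrable g) (hpos : ∀ t, 0 < g t) :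
    StrictMono fun x => ∫ t in Iic x, g t :=
  strictMono_of_hasDerivAt_pos (hasDerivAt_setIntegral_Iic hg hgi) hpos

theorem tendsto_setIntegral_Iic_atTop (hgi : Integrable g) :
    Tendsto (fun x => ∫ t in Iic x, g t) atTop (𝓝 (∫ t, g t)) :=
  (aecover_Iic tendsto_id).integral_tendsto_of_countably_generated hgi

end DistributionFunction

theorem continuous_of_hasDerivAt_eq_neg_div {F f : ℝ → ℝ → ℝ} {π Z : ℝ → ℝ}
    (hf : Continuous fun q : ℝ × ℝ => f q.1 q.2) (hπ : Continuous π)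
    (hpos : ∀ x θ, 0 < π θ * f x θ) (hZ : ∀ x, 0 < Z x) (hFx : ∀ θ, Continuous (F · θ))
    (hFθ : ∀ x θ, HasDerivAt (F x) (-(π θ * f x θ / Z x)) θ) : Continuous Z := by
  set N : ℝ → ℝ := fun x => ∫ θ in (0 : ℝ)..1, π θ * f x θ
  have hNc : Continuous N := intervalIntegral.continuous_parametric_intervalIntegral_of_continuous'
    ((hπ.comp continuous_snd).mul hf) 0 1
  have hfx : ∀ x, Continuous (f x) := fun x => hf.comp (continuous_const.prodMk continuous_id)
  have hN : ∀ x, 0 < N x := fun x => intervalIntegral.intervalIntegral_pos_of_pos_on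
    ((hπ.mul (hfx x)).intervalIntegrable 0 1) (fun θ _ => hpos x θ) one_pos
  -- `Z` is recovered from the `θ`-increment of `F` over `[0, 1]`, which is continuous in `x`
  have hincr : ∀ x, F x 0 - F x 1 = N x / Z x := fun x => by
    rw [← neg_sub, ← intervalIntegral.integral_eq_sub_of_hasDerivAt (fun θ _ => hFθ x θ)
      (((hπ.mul (hfx x)).div_const _).neg.intervalIntegrable 0 1),
      intervalIntegral.integral_neg, intervalIntegral.integral_div, neg_neg]
  have hZeq : Z = fun x => N x / (F x 0 - F x 1) := funext fun x => by
    rw [hincr, div_div_cancel₀ (hN x).ne']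
  rw [hZeq]
  exact hNc.div ((hFx 0).sub (hFx 1)) fun x => (hincr x ▸ div_pos (hN x) (hZ x)).ne'

theorem integral_comp_mul_deriv_of_surjective {u u' : ℝ → ℝ} (hu : ∀ x, HasDerivAt u (u' x) x)
    (hu' : ∀ x, 0 < u' x) (hsurj : Surjective u) (φ : ℝ → ℝ) :
    ∫ x, φ (u x) * u' x = ∫ t, φ t := by
  have := integral_image_eq_integral_abs_deriv_smul MeasurableSet.univ
    (fun x _ => (hu x).hasDerivWithinAt) (strictMono_of_hasDerivAt_pos hu hu').injective.injOn φ
  simp only [image_univ, hsurj.range_eq, Measure.restrict_univ, smul_eq_mul] at this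
  simp only [this, abs_of_pos (hu' _), mul_comm]

section LocationForm

variable {F f : ℝ → ℝ → ℝ} {u u' v : ℝ → ℝ}

/-- The density of `u x - v 0` when `x` has density `f · 0`. -/
noncomputable def reducedDensity (f : ℝ → ℝ → ℝ) (u u' v : ℝ → ℝ) (t : ℝ) : ℝ :=
  f (invFun u (t + v 0)) 0 / u' (invFun u (t + v 0))

theorem eq_reducedDensity_mul (hFx : ∀ x θ, HasDerivAt (fun x => F x θ) (f x θ) x)
    (hu : ∀ x, HasStrictDerivAt u (u' x) x) (hu' : ∀ x, 0 < u' x) (hsurj : Surjective u)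
    (hinv : ∀ x₁ θ₁ x₂ θ₂, u x₁ - v θ₁ = u x₂ - v θ₂ → F x₁ θ₁ = F x₂ θ₂) (x θ : ℝ) :
    f x θ = reducedDensity f u u' v (u x - v θ) * u' x := by
  set x' := invFun u (u x - v θ + v 0)
  have hx' : u x' = u x - v θ + v 0 := invFun_eq (hsurj _)
  have hgu : ∀ y, invFun u (u y) = y :=
    leftInverse_invFun (strictMono_of_hasDerivAt_pos (fun y => (hu y).hasDerivAt) hu').injective
  have hg : HasDerivAt (invFun u) (u' x')⁻¹ (u x - v θ + v 0) :=
    hx' ▸ ((hu x').to_local_left_inverse (hu' x').ne' (.of_forall hgu)).hasDerivAt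
  have hcomp : HasDerivAt (fun y => F (invFun u (u y - v θ + v 0)) 0)
      (f x' 0 * ((u' x')⁻¹ * u' x)) x :=
    (hFx x' 0).comp (h := fun y => invFun u (u y - v θ + v 0)) x
      (hg.comp (h := fun y => u y - v θ + v 0) x (((hu x).hasDerivAt.sub_const _).add_const _))
  have hsame : (fun y => F (invFun u (u y - v θ + v 0)) 0) = fun y => F y θ := funext fun y =>
    hinv _ _ _ _ (by rw [invFun_eq (hsurj _)]; ring)
  rw [hsame] at hcomp
  rw [(hFx x θ).unique hcomp]
  change _ = f x' 0 / u' x' * u' x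
  ring

theorem integral_reducedDensity (hu : ∀ x, HasDerivAt u (u' x) x) (hu' : ∀ x, 0 < u' x)
    (hsurj : Surjective u) : ∫ t, reducedDensity f u u' v t = ∫ x, f x 0 := by
  have hgu : ∀ x, invFun u (u x) = x :=
    leftInverse_invFun (strictMono_of_hasDerivAt_pos hu hu').injective
  rw [← integral_sub_right_eq_self _ (v 0), ← integral_comp_mul_deriv_of_surjective hu hu' hsurj]
  congr 1 with x
  rw [reducedDensity, sub_add_cancel, hgu, div_mul_cancel₀ _ (hu' x).ne']

end LocationForm

theorem consistent_and_calibrated_implies_location_family_general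
    (f : ℝ → ℝ → ℝ)
    (hsmooth : ContDiff ℝ 2 (fun q : ℝ × ℝ => f q.1 q.2))
    (hfpos : ∀ x θ, 0 < f x θ)
    (hfnorm : ∀ θ, ∫ x, f x θ = 1)
    (F : ℝ → ℝ → ℝ)
    (hF : ∀ x θ, F x θ = ∫ t in Set.Iic x, f t θ)
    (π : ℝ → ℝ) (hπc : Continuous π) (hπpos : ∀ θ, 0 < π θ)
    (hπipos : ∀ x, 0 < ∫ θ, π θ * f x θ)
    (hcalib : ∀ x θ,
      π θ * f x θ / (∫ θ', π θ' * f x θ') = -(deriv (fun ϑ => F x ϑ) θ)) :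
    ∃ (u v φ : ℝ → ℝ),
      (StrictMono u ∨ StrictAnti u) ∧ Differentiable ℝ u ∧
      (StrictMono v ∨ StrictAnti v) ∧ Differentiable ℝ v ∧
      (∀ t, 0 ≤ φ t) ∧ (∫ t, φ t = 1) ∧
      ∀ x θ, f x θ = φ (u x - v θ) * deriv u x := by
  obtain rfl : F = fun x θ => ∫ t in Iic x, f t θ := funext₂ hF
  have hf : Continuous fun q : ℝ × ℝ => f q.1 q.2 := hsmooth.continuous
  have hfθ : ∀ θ, Continuous (f · θ) := fun θ => hf.comp (continuous_id.prodMk continuous_const)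
  have hfi : ∀ θ, Integrable (f · θ) := fun θ => .of_integral_ne_zero (by simp [hfnorm])
  have hFx := fun x θ => hasDerivAt_setIntegral_Iic (hfθ θ) (hfi θ) x
  set Z := fun x => ∫ θ, π θ * f x θ
  have hπf : ∀ x θ, 0 < π θ * f x θ := fun x θ => mul_pos (hπpos θ) (hfpos x θ)
  have hFθ : ∀ x θ, HasDerivAt (fun ϑ => ∫ t in Iic x, f t ϑ) (-(π θ * f x θ / Z x)) θ :=
    fun x θ => hasDerivAt_of_deriv_eq_of_ne_zero (by rw [hcalib, neg_neg])
      (neg_ne_zero.2 (div_pos (hπf x θ) (hπipos x)).ne')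
  have hZ : Continuous Z := continuous_of_hasDerivAt_eq_neg_div hf hπc hπf hπipos
    (fun θ => continuous_iff_continuousAt.2 fun x => (hFx x θ).continuousAt) hFθ
  set u := fun x => ∫ t in (0 : ℝ)..x, Z t
  set v := fun θ => ∫ t in (0 : ℝ)..θ, π t
  have hu : ∀ x, HasStrictDerivAt u (Z x) x := hZ.integral_hasStrictDerivAt 0
  have hv : ∀ θ, HasStrictDerivAt v (π θ) θ := hπc.integral_hasStrictDerivAt 0
  have hud : Differentiable ℝ u := fun x => (hu x).hasDerivAt.differentiableAt
  have hvd : Differentiable ℝ v := fun θ => (hv θ).hasDerivAt.differentiableAt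
  have humono : StrictMono u := strictMono_of_hasDerivAt_pos (fun x => (hu x).hasDerivAt) hπipos
  have hvmono : StrictMono v := strictMono_of_hasDerivAt_pos (fun θ => (hv θ).hasDerivAt) hπpos
  have hinv : ∀ x₁ θ₁ x₂ θ₂, u x₁ - v θ₁ = u x₂ - v θ₂ → _ := fun _ _ _ _ =>
    eq_of_sub_eq_of_hasDerivAt_partial hf hFx hFθ hu hπipos (fun θ => (hv θ).hasDerivAt)
      hvmono.monotone
  have hsurj : Surjective u := surjective_of_sub_invariant
    (fun θ => strictMono_setIntegral_Iic (hfθ θ) (hfi θ) (hfpos · θ))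
    (fun θ => hfnorm θ ▸ tendsto_setIntegral_Iic_atTop (hfi θ))
    (fun θ => tendsto_integral_Iic_zero tendsto_id) humono hud.continuous hvmono hvd.continuous hinv
  have hloc := eq_reducedDensity_mul hFx hu hπipos hsurj hinv
  exact ⟨u, v, reducedDensity f u Z v, .inl humono, hud, .inl hvmono, hvd,
    fun t => (div_pos (hfpos _ _) (hπipos _)).le,
    (integral_reducedDensity (fun x => (hu x).hasDerivAt) hπipos hsurj).trans (hfnorm 0),
    fun x θ => (hu x).hasDerivAt.deriv ▸ hloc x θ⟩

/-- If a probabilistic inference is simultaneously consistent (the posterior is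
assigned via the Consistency Theorem with a positive consistency factor `π`) and
exactly calibrated (the posterior equals `|∂F/∂θ| = -∂F/∂θ`), then the sampling
family is reducible, by separate one-to-one transformations `y = u x` of the sample
space and `μ = v θ` of the parameter space, to a pure location family `φ (y - μ)`. -/
theorem consistent_and_calibrated_implies_location_family
    (f : ℝ → ℝ → ℝ)
    (hsmooth : ContDiff ℝ 2 (fun q : ℝ × ℝ => f q.1 q.2))
    (hfpos : ∀ x θ, 0 < f x θ)
    (hfnorm : ∀ θ, ∫ x, f x θ = 1)
    (F : ℝ → ℝ → ℝ)
    (hF : ∀ x θ, F x θ = ∫ t in Set.Iic x, f t θ)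
    (π : ℝ → ℝ) (hπc : Continuous π) (hπpos : ∀ θ, 0 < π θ)
    (hπint : ∀ x, Integrable (fun θ => π θ * f x θ))
    (hπipos : ∀ x, 0 < ∫ θ, π θ * f x θ)
    (hcalib : ∀ x θ,
      π θ * f x θ / (∫ θ', π θ' * f x θ') = -(deriv (fun ϑ => F x ϑ) θ)) :
    ∃ (u v φ : ℝ → ℝ),
      (StrictMono u ∨ StrictAnti u) ∧ Differentiable ℝ u ∧
      (StrictMono v ∨ StrictAnti v) ∧ Differentiable ℝ v ∧
      (∀ t, 0 ≤ φ t) ∧ (∫ t, φ t = 1) ∧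
      ∀ x θ, f x θ = φ (u x - v θ) * deriv u x :=
  consistent_and_calibrated_implies_location_family_general f hsmooth hfpos hfnorm F hF π hπc hπpos
    hπipos hcalib
end
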